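/- For all real numbers α, x, y, the generalized Euler matrix satisfies 𝓔^{(α)}(x+y) = 𝓔^{(α)}(x)·P[y] = P[x]·𝓔^{(α)}(y) = 𝓔^{(α)}(y)·P[x]. In particular: 𝓔(x+y) = P[x]·𝓔(y) = P[y]·𝓔(x), 𝓔(x) = P[x]·𝓔, 𝓔(x + 1/2) = P[x]·𝔈, and 𝓔 = P[−1/2]·𝔈. -/

import Mathlib

/-!
Both `𝓔^{(α)}(x)` and `P[x]` are binomial matrices `(C(i,j) a_{i-j})`, and binomial matrices
multiply by binomial convolution of their sequences, which is commutative. The generating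
function factors as `F_{x+y}(z) = F_x(z) e^{yz}`, so comparing coefficients of exponential
generating functions gives `E_k^{(α)}(x+y) = Σ_j C(k,j) E_j^{(α)}(x) y^{k-j}`, i.e. the
sequence of `𝓔^{(α)}(x+y)` is the binomial convolution of those of `𝓔^{(α)}(x)` and `P[y]`.
-/

noncomputable section

/-- `E α x k` is the generalized Euler polynomial `E_k^{(α)}(x)`, characterized by the
generating function `(2/(e^z+1))^α e^{xz} = Σ_k E_k^{(α)}(x) z^k / k!` for `|z| < π`. -/
def IsGenEulerFamily (E : ℝ → ℝ → ℕ → ℝ) : Prop :=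
  ∀ α x z : ℝ, |z| < Real.pi →
    HasSum (fun k : ℕ => E α x k * z ^ k / (Nat.factorial k : ℝ))
      ((2 / (Real.exp z + 1)) ^ α * Real.exp (x * z))

/-- The generalized `(n+1)×(n+1)` Euler matrix `𝓔^{(α)}(x)`, with `(i,j)` entry
`C(i,j) E_{i-j}^{(α)}(x)` (which is `0` for `j > i` since then `C(i,j) = 0`). -/
def genEulerMatrix (E : ℝ → ℝ → ℕ → ℝ) (n : ℕ) (α x : ℝ) :
    Matrix (Fin (n + 1)) (Fin (n + 1)) ℝ :=
  Matrix.of fun i j => (Nat.choose (i : ℕ) (j : ℕ) : ℝ) * E α x ((i : ℕ) - (j : ℕ))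

/-- The generalized Pascal matrix of the first kind `P[x]`. -/
def pascalMatrix (n : ℕ) (x : ℝ) : Matrix (Fin (n + 1)) (Fin (n + 1)) ℝ :=
  Matrix.of fun i j => (Nat.choose (i : ℕ) (j : ℕ) : ℝ) * x ^ ((i : ℕ) - (j : ℕ))

open Finset

theorem Nat.choose_mul_choose_sub_comm (i j p : ℕ) :
    i.choose p * (i - p).choose j = i.choose j * (i - j).choose p := by
  rcases le_or_gt (p + j) i with h | h
  · have h1 := Nat.choose_mul (n := i) (k := i - p) (s := j) (by omega)
    rwa [Nat.choose_symm (by omega), show i - p - j = i - j - p by omega,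
      Nat.choose_symm (by omega)] at h1
  · have choose_mul_eq_zero : ∀ a b, i < a + b → i.choose a * (i - a).choose b = 0 :=
      fun a b hab => by
        rcases le_or_gt a i with ha | ha
        · rw [Nat.choose_eq_zero_of_lt (n := i - a) (by omega), mul_zero]
        · rw [Nat.choose_eq_zero_of_lt ha, zero_mul]
    rw [choose_mul_eq_zero p j h, choose_mul_eq_zero j p (by omega)]

section BinomialConvolution

variable {R : Type*} [CommSemiring R]

def binomialConvolution (a b : ℕ → R) (k : ℕ) : R :=
  ∑ p ∈ range (k + 1), (k.choose p : R) * a p * b (k - p)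

theorem binomialConvolution_comm (a b : ℕ → R) :
    binomialConvolution a b = binomialConvolution b a := by
  funext k
  rw [binomialConvolution, ← sum_range_reflect]
  refine sum_congr rfl fun p hp => ?_
  have hpk : p ≤ k := Nat.lt_succ_iff.mp (mem_range.mp hp)
  rw [Nat.add_sub_cancel, Nat.choose_symm hpk, Nat.sub_sub_self hpk]
  ring

def binomialMatrix (m : ℕ) (a : ℕ → R) : Matrix (Fin m) (Fin m) R :=
  Matrix.of fun i j => ((i : ℕ).choose j : R) * a (i - j)

theorem binomialMatrix_mul {m : ℕ} (a b : ℕ → R) :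
    binomialMatrix m a * binomialMatrix m b = binomialMatrix m (binomialConvolution a b) := by
  ext i j
  simp only [binomialMatrix, Matrix.mul_apply, Matrix.of_apply, binomialConvolution, mul_sum]
  set g : ℕ → R := fun l => ((i : ℕ).choose l : R) * a (i - l) * ((l.choose j : R) * b (l - j))
  have hg : ∀ l, (i : ℕ) < l → g l = 0 := fun l hl => by simp [g, Nat.choose_eq_zero_of_lt hl]
  -- only `j ≤ l ≤ i` contribute; substitute `l = i - p`
  calc ∑ l : Fin m, g l
      = ∑ l ∈ range (i + 1), g l := by
        rw [Fin.sum_univ_eq_sum_range g]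
        exact (sum_subset (fun l hl => by simp only [mem_range] at hl ⊢; omega)
          fun l _ hl => hg l (by simpa using hl)).symm
    _ = ∑ p ∈ range (i + 1), g (i - p) := (sum_range_reflect g _).symm
    _ = ∑ p ∈ range (i + 1), ((i : ℕ).choose j : R) *
          (((i - j : ℕ).choose p : R) * a p * b (i - j - p)) := by
        refine sum_congr rfl fun p hp => ?_
        have hpi : p ≤ i := Nat.lt_succ_iff.mp (mem_range.mp hp)
        have key : ((i : ℕ).choose p : R) * ((i - p : ℕ).choose j : R) =
            ((i : ℕ).choose j : R) * ((i - j : ℕ).choose p : R) := by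
          rw [← Nat.cast_mul, ← Nat.cast_mul, Nat.choose_mul_choose_sub_comm]
        simp only [g, Nat.choose_symm hpi, Nat.sub_sub_self hpi, Nat.sub_right_comm (i : ℕ) p j]
        calc _ = ((i : ℕ).choose p : R) * ((i - p : ℕ).choose j : R) * (a p * b (i - j - p)) := by
              ring
          _ = _ := by rw [key]; ring
    _ = ∑ p ∈ range (i - j + 1), ((i : ℕ).choose j : R) *
          (((i - j : ℕ).choose p : R) * a p * b (i - j - p)) :=
        (sum_subset (fun p hp => by simp only [mem_range] at hp ⊢; omega)
          fun p _ hp => by simp [Nat.choose_eq_zero_of_lt (by simpa using hp : i - j < p)]).symm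

theorem binomialMatrix_mul_comm {m : ℕ} (a b : ℕ → R) :
    binomialMatrix m a * binomialMatrix m b = binomialMatrix m b * binomialMatrix m a := by
  rw [binomialMatrix_mul, binomialMatrix_mul, binomialConvolution_comm]

end BinomialConvolution

theorem hasFPowerSeriesAt_ofScalars_of_hasSum {c : ℕ → ℝ} {f : ℝ → ℝ} {r : ℝ} (hr : 0 < r)
    (hc : ∀ z, |z| < r → HasSum (fun k => c k * z ^ k) (f z)) :
    HasFPowerSeriesAt f (FormalMultilinearSeries.ofScalars ℝ c) 0 := by
  obtain ⟨ρ, hρ0, hρr⟩ := exists_between hr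
  lift ρ to NNReal using hρ0.le
  refine ⟨ρ, ?_, by simpa using hρ0, fun {y} hy => ?_⟩
  · refine FormalMultilinearSeries.le_radius_of_summable _ ?_
    simpa [FormalMultilinearSeries.ofScalars_norm, abs_mul, abs_pow]
      using (hc ρ (by rwa [NNReal.abs_eq])).summable.abs
  · have hy : |y| < ρ := by simpa using hy
    simpa [FormalMultilinearSeries.ofScalars_apply_eq, mul_comm]
      using hc y (hy.trans hρr)

theorem coeff_eq_of_hasSum_pow_mul {a b : ℕ → ℝ} {f : ℝ → ℝ} {r : ℝ} (hr : 0 < r)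
    (ha : ∀ z, |z| < r → HasSum (fun k => a k * z ^ k) (f z))
    (hb : ∀ z, |z| < r → HasSum (fun k => b k * z ^ k) (f z)) : a = b :=
  FormalMultilinearSeries.ofScalars_series_injective ℝ ℝ
    ((hasFPowerSeriesAt_ofScalars_of_hasSum hr ha).eq_formalMultilinearSeries
      (hasFPowerSeriesAt_ofScalars_of_hasSum hr hb))

theorem hasSum_binomialConvolution_mul {a b : ℕ → ℝ} {z A B : ℝ}
    (ha : HasSum (fun k => a k * z ^ k / k.factorial) A)
    (hb : HasSum (fun k => b k * z ^ k / k.factorial) B) :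
    HasSum (fun k => binomialConvolution a b k * z ^ k / k.factorial) (A * B) := by
  have h := hasSum_sum_range_mul_of_summable_norm
    (f := fun k => a k * z ^ k / k.factorial) (g := fun k => b k * z ^ k / k.factorial)
    (by simpa only [Real.norm_eq_abs] using ha.summable.abs)
    (by simpa only [Real.norm_eq_abs] using hb.summable.abs)
  rw [ha.tsum_eq, hb.tsum_eq] at h
  refine h.congr_fun fun k => ?_
  rw [binomialConvolution, sum_mul, sum_div]
  refine sum_congr rfl fun p hp => ?_
  have hpk : p ≤ k := Nat.lt_succ_iff.mp (mem_range.mp hp)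
  rw [Nat.cast_choose ℝ hpk, ← Nat.add_sub_cancel' hpk, pow_add, Nat.add_sub_cancel_left]
  field_simp

theorem hasSum_pow_mul_pow_div_factorial (y z : ℝ) :
    HasSum (fun k => y ^ k * z ^ k / k.factorial) (Real.exp (y * z)) := by
  simpa [← mul_pow, Real.exp_eq_exp_ℝ] using NormedSpace.expSeries_div_hasSum_exp (y * z)

theorem genEulerFamily_add {E : ℝ → ℝ → ℕ → ℝ} (hE : IsGenEulerFamily E) (α x y : ℝ) :
    E α (x + y) = binomialConvolution (E α x) (y ^ ·) := by
  have key := coeff_eq_of_hasSum_pow_mul Real.pi_pos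
    (f := fun z => (2 / (Real.exp z + 1)) ^ α * Real.exp ((x + y) * z))
    (a := fun k => E α (x + y) k / k.factorial)
    (b := fun k => binomialConvolution (E α x) (y ^ ·) k / k.factorial)
    (fun z hz => by simpa only [div_mul_eq_mul_div] using hE α (x + y) z hz)
    (fun z hz => by
      have h := hasSum_binomialConvolution_mul (hE α x z hz)
        (hasSum_pow_mul_pow_div_factorial y z)
      rw [mul_assoc, ← Real.exp_add, ← add_mul] at h
      simpa only [div_mul_eq_mul_div] using h)
  funext k
  exact (div_left_inj' (Nat.cast_ne_zero.mpr k.factorial_ne_zero)).mp (congrFun key k)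

theorem genEulerMatrix_add {E : ℝ → ℝ → ℕ → ℝ} (hE : IsGenEulerFamily E) (n : ℕ) (α x y : ℝ) :
    genEulerMatrix E n α (x + y) = genEulerMatrix E n α x * pascalMatrix n y := by
  change _ = binomialMatrix (n + 1) (E α x) * binomialMatrix (n + 1) (y ^ ·)
  rw [binomialMatrix_mul, ← genEulerFamily_add hE]
  rfl

theorem genEulerMatrix_mul_pascalMatrix_comm (E : ℝ → ℝ → ℕ → ℝ) (n : ℕ) (α x y : ℝ) :
    genEulerMatrix E n α x * pascalMatrix n y = pascalMatrix n y * genEulerMatrix E n α x :=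
  binomialMatrix_mul_comm _ _

theorem euler_matrix_pascal (E : ℝ → ℝ → ℕ → ℝ) (hE : IsGenEulerFamily E)
    (n : ℕ) (α x y : ℝ) :
    genEulerMatrix E n α (x + y) = genEulerMatrix E n α x * pascalMatrix n y ∧
    genEulerMatrix E n α (x + y) = pascalMatrix n x * genEulerMatrix E n α y ∧
    genEulerMatrix E n α (x + y) = genEulerMatrix E n α y * pascalMatrix n x ∧
    genEulerMatrix E n 1 (x + y) = pascalMatrix n x * genEulerMatrix E n 1 y ∧
    genEulerMatrix E n 1 (x + y) = pascalMatrix n y * genEulerMatrix E n 1 x ∧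
    genEulerMatrix E n 1 x = pascalMatrix n x * genEulerMatrix E n 1 0 ∧
    genEulerMatrix E n 1 (x + 1 / 2) = pascalMatrix n x * genEulerMatrix E n 1 (1 / 2) ∧
    genEulerMatrix E n 1 0 = pascalMatrix n (-(1 / 2)) * genEulerMatrix E n 1 (1 / 2) := by
  have hR := genEulerMatrix_add hE n
  have hL : ∀ α x y, genEulerMatrix E n α (x + y) = pascalMatrix n x * genEulerMatrix E n α y :=
    fun α x y => by rw [add_comm x y, hR, genEulerMatrix_mul_pascalMatrix_comm]
  refine ⟨hR α x y, hL α x y, ?_, hL 1 x y, ?_, ?_, hL 1 x (1 / 2), ?_⟩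
  · rw [add_comm x y]; exact hR α y x
  · rw [add_comm x y]; exact hL 1 y x
  · simpa only [add_zero] using hL 1 x 0
  · simpa only [neg_add_cancel] using hL 1 (-(1 / 2)) (1 / 2)
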